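/- arXiv:2604.12355 — 3 statements merged into one kernel-verified Lean document; each statement's English description precedes it below -/
import Mathlib

section
/- Let A be an idempotent torsion-free graded ring. Then A itself, viewed as an object of the category A-gr of unital torsion-free graded left A-modules, is a graded generator of A-gr: for every M ∈ A-gr, Tr_M(A) = M. Consequently, a module P ∈ A-gr is a graded generator of A-gr if and only if Tr_A(P) = A. -/
/-!
Common infrastructure: non-unital (graded) rings, non-unital graded modules
(given by explicit action functions), graded homomorphisms of all degrees,
traces, torsion submodules, balanced tensor products, and graded Morita
contexts, following Dokuchaev–Simón, "Graded Equivalence for Graded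
Idempotent Rings".
-/

open DirectSum

section CommonDefs

variable {Γ : Type*} [Group Γ] {A B M N P Q : Type*}

/-- `M` is a left module over the non-unital ring `A` via the action `s`. -/
structure IsLMod (A M : Type*) [NonUnitalRing A] [AddCommGroup M] (s : A → M → M) : Prop where
  smul_add : ∀ (a : A) (m n : M), s a (m + n) = s a m + s a n
  add_smul : ∀ (a b : A) (m : M), s (a + b) m = s a m + s b m
  mul_smul : ∀ (a b : A) (m : M), s (a * b) m = s a (s b m)

/-- `M` is a right module over the non-unital ring `B` via the action `s`. -/
structure IsRMod (B M : Type*) [NonUnitalRing B] [AddCommGroup M] (s : M → B → M) : Prop where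
  add_smul : ∀ (m n : M) (b : B), s (m + n) b = s m b + s n b
  smul_add : ∀ (m : M) (a b : B), s m (a + b) = s m a + s m b
  smul_mul : ∀ (m : M) (a b : B), s m (a * b) = s (s m a) b

/-- The ring `A` is idempotent: `A² = A`. -/
def IsIdem (A : Type*) [NonUnitalRing A] : Prop :=
  ∀ a : A, a ∈ AddSubgroup.closure {x : A | ∃ y z : A, x = y * z}

/-- The left `A`-module with action `s` is unital: `AM = M`. -/
def IsUnitalL [NonUnitalRing A] [AddCommGroup M] (s : A → M → M) : Prop :=
  ∀ m : M, m ∈ AddSubgroup.closure {x : M | ∃ (a : A) (m' : M), x = s a m'}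

/-- The right `B`-module with action `s` is unital: `MB = M`. -/
def IsUnitalR [NonUnitalRing B] [AddCommGroup M] (s : M → B → M) : Prop :=
  ∀ m : M, m ∈ AddSubgroup.closure {x : M | ∃ (m' : M) (b : B), x = s m' b}

/-- The left `A`-module with action `s` is torsion-free: `Am = 0 → m = 0`. -/
def IsTorsionFreeL [NonUnitalRing A] [AddCommGroup M] (s : A → M → M) : Prop :=
  ∀ m : M, (∀ a : A, s a m = 0) → m = 0

/-- The right `B`-module with action `s` is torsion-free. -/
def IsTorsionFreeR [NonUnitalRing B] [AddCommGroup M] (s : M → B → M) : Prop :=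
  ∀ m : M, (∀ b : B, s m b = 0) → m = 0

/-- The family `𝒜` makes `A` a `Γ`-graded ring (multiplicativity of the grading;
the direct sum decomposition is recorded by a `DirectSum.Decomposition` instance). -/
def IsGRing [NonUnitalRing A] (𝒜 : Γ → AddSubgroup A) : Prop :=
  ∀ ⦃σ τ : Γ⦄ ⦃a b : A⦄, a ∈ 𝒜 σ → b ∈ 𝒜 τ → a * b ∈ 𝒜 (σ * τ)

/-- Grading compatibility for a left module: `A_σ · M_τ ⊆ M_{στ}`. -/
def IsGModL [NonUnitalRing A] [AddCommGroup M] (𝒜 : Γ → AddSubgroup A)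
    (ℳ : Γ → AddSubgroup M) (s : A → M → M) : Prop :=
  ∀ ⦃σ τ : Γ⦄ ⦃a : A⦄ ⦃m : M⦄, a ∈ 𝒜 σ → m ∈ ℳ τ → s a m ∈ ℳ (σ * τ)

/-- Grading compatibility for a right module: `M_τ · B_σ ⊆ M_{τσ}`. -/
def IsGModR [NonUnitalRing B] [AddCommGroup M] (ℬ : Γ → AddSubgroup B)
    (ℳ : Γ → AddSubgroup M) (s : M → B → M) : Prop :=
  ∀ ⦃σ τ : Γ⦄ ⦃m : M⦄ ⦃b : B⦄, m ∈ ℳ τ → b ∈ ℬ σ → s m b ∈ ℳ (τ * σ)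

/-- `f : M → N` is a homomorphism of left `A`-modules. -/
def IsLinL [NonUnitalRing A] [AddCommGroup M] [AddCommGroup N]
    (sM : A → M → M) (sN : A → N → N) (f : M →+ N) : Prop :=
  ∀ (a : A) (m : M), f (sM a m) = sN a (f m)

/-- `f : M → N` is a homomorphism of right `B`-modules. -/
def IsLinR [NonUnitalRing B] [AddCommGroup M] [AddCommGroup N]
    (sM : M → B → M) (sN : N → B → N) (f : M →+ N) : Prop :=
  ∀ (m : M) (b : B), f (sM m b) = sN (f m) b

/-- `f` is a graded homomorphism of degree `σ` (left module convention):
`f(M_τ) ⊆ N_{τσ}`. -/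
def IsDegL [AddCommGroup M] [AddCommGroup N] (ℳ : Γ → AddSubgroup M)
    (𝒩 : Γ → AddSubgroup N) (σ : Γ) (f : M →+ N) : Prop :=
  ∀ τ : Γ, ∀ m ∈ ℳ τ, f m ∈ 𝒩 (τ * σ)

/-- `f` is a graded homomorphism of degree `σ` (right module convention):
`f(M_τ) ⊆ N_{στ}`. -/
def IsDegR [AddCommGroup M] [AddCommGroup N] (ℳ : Γ → AddSubgroup M)
    (𝒩 : Γ → AddSubgroup N) (σ : Γ) (f : M →+ N) : Prop :=
  ∀ τ : Γ, ∀ m ∈ ℳ τ, f m ∈ 𝒩 (σ * τ)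

/-- `HOM_A(M,N)`: the additive group of graded left `A`-module homomorphisms
of all degrees (i.e. sums of homogeneous `A`-linear maps). -/
def HOML [NonUnitalRing A] [AddCommGroup M] [AddCommGroup N]
    (sM : A → M → M) (sN : A → N → N)
    (ℳ : Γ → AddSubgroup M) (𝒩 : Γ → AddSubgroup N) : AddSubgroup (M →+ N) :=
  AddSubgroup.closure {f | IsLinL sM sN f ∧ ∃ σ : Γ, IsDegL ℳ 𝒩 σ f}

/-- `HOM_B(M,N)` for right modules. -/
def HOMR [NonUnitalRing B] [AddCommGroup M] [AddCommGroup N]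
    (sM : M → B → M) (sN : N → B → N)
    (ℳ : Γ → AddSubgroup M) (𝒩 : Γ → AddSubgroup N) : AddSubgroup (M →+ N) :=
  AddSubgroup.closure {f | IsLinR sM sN f ∧ ∃ σ : Γ, IsDegR ℳ 𝒩 σ f}

/-- Given a subgroup `H` of homomorphisms `M →+ N` and a `C`-action on `M`
(`tw`), this is the subgroup `C·H` generated by the twisted maps
`c·f = f ∘ (tw c)`.  It models e.g. `B·HOM_A(P,N)` with `(b·f)(p) = f(pb)`. -/
def smulHOM [AddCommGroup M] [AddCommGroup N] (C : Type*)
    (H : AddSubgroup (M →+ N)) (tw : C → M → M) : AddSubgroup (M →+ N) :=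
  AddSubgroup.closure {g | ∃ (c : C) (f : M →+ N), f ∈ H ∧ ∀ m : M, g m = f (tw c m)}

/-- The graded trace `Tr_M(P)`: the additive subgroup of `M` generated by the
images of all graded homomorphisms `P → M` of arbitrary degree. -/
def TraceL [NonUnitalRing A] [AddCommGroup P] [AddCommGroup M]
    (sP : A → P → P) (sM : A → M → M)
    (𝓟 : Γ → AddSubgroup P) (ℳ : Γ → AddSubgroup M) : AddSubgroup M :=
  AddSubgroup.closure {x | ∃ f ∈ HOML sP sM 𝓟 ℳ, ∃ p : P, x = f p}

/-- The torsion part `t_A(M) = {m ∈ M | A·m = 0}`, as an additive subgroup. -/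
def torsionL [NonUnitalRing A] [AddCommGroup M] {s : A → M → M}
    (hM : IsLMod A M s) : AddSubgroup M where
  carrier := {m : M | ∀ a : A, s a m = 0}
  zero_mem' := by
    intro a
    have h := hM.smul_add a 0 0
    rw [add_zero] at h
    exact left_eq_add.mp h
  add_mem' := by
    intro m n hm hn a
    rw [hM.smul_add, hm a, hn a, add_zero]
  neg_mem' := by
    intro m hm a
    have h0 : s a (0 : M) = 0 := by
      have h := hM.smul_add a 0 0
      rw [add_zero] at h
      exact left_eq_add.mp h
    have h := hM.smul_add a m (-m)
    rw [add_neg_cancel, h0, hm a, zero_add] at h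
    exact h.symm

end CommonDefs

section Tensor

variable (B : Type*) {P Q : Type*} [AddCommGroup P] [AddCommGroup Q]

/-- Relations defining the balanced tensor product `P ⊗_B Q` of a right
`B`-module `P` (action `rs`) and a left `B`-module `Q` (action `ls`). -/
def TenRel (rs : P → B → P) (ls : B → Q → Q) : AddSubgroup (FreeAbelianGroup (P × Q)) :=
  AddSubgroup.closure
    ({x | ∃ (p p' : P) (q : Q), x = FreeAbelianGroup.of (p + p', q) -
        FreeAbelianGroup.of (p, q) - FreeAbelianGroup.of (p', q)} ∪
     {x | ∃ (p : P) (q q' : Q), x = FreeAbelianGroup.of (p, q + q') -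
        FreeAbelianGroup.of (p, q) - FreeAbelianGroup.of (p, q')} ∪
     {x | ∃ (p : P) (b : B) (q : Q), x = FreeAbelianGroup.of (rs p b, q) -
        FreeAbelianGroup.of (p, ls b q)})

/-- The balanced tensor product `P ⊗_B Q`. -/
abbrev Ten (rs : P → B → P) (ls : B → Q → Q) : Type _ :=
  FreeAbelianGroup (P × Q) ⧸ TenRel B rs ls

/-- The elementary tensor `p ⊗ q`. -/
def tmul {B : Type*} {rs : P → B → P} {ls : B → Q → Q} (p : P) (q : Q) :
    Ten B rs ls :=
  QuotientAddGroup.mk (FreeAbelianGroup.of (p, q))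

/-- The natural grading of the tensor product: the `ρ`-component is generated
by the `p ⊗ q` with `p, q` homogeneous of degrees multiplying to `ρ`. -/
def TenGr {Γ : Type*} [Group Γ] {B : Type*} {rs : P → B → P} {ls : B → Q → Q}
    (𝓟 : Γ → AddSubgroup P) (𝒬 : Γ → AddSubgroup Q) (ρ : Γ) :
    AddSubgroup (Ten B rs ls) :=
  AddSubgroup.closure
    {x | ∃ (σ τ : Γ) (p : P) (q : Q), p ∈ 𝓟 σ ∧ q ∈ 𝒬 τ ∧ σ * τ = ρ ∧ x = tmul p q}

end Tensor

section Morita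

/-- A graded Morita context `(A, B, P, Q, μ, ν)` between idempotent graded
rings, with the trace maps given by the balanced pairings
`pr = ⟨-,-⟩ : P × Q → A` and `br = [-,-] : Q × P → B`, both surjective. -/
structure GMoritaCtx (Γ : Type*) [Group Γ] (A B P Q : Type*)
    [NonUnitalRing A] [NonUnitalRing B] [AddCommGroup P] [AddCommGroup Q]
    (𝒜 : Γ → AddSubgroup A) (ℬ : Γ → AddSubgroup B)
    (𝓟 : Γ → AddSubgroup P) (𝒬 : Γ → AddSubgroup Q)
    (ap : A → P → P) (pb : P → B → P) (bq : B → Q → Q) (qa : Q → A → Q)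
    (pr : P → Q → A) (br : Q → P → B) : Prop where
  gradeA : IsGRing 𝒜
  gradeB : IsGRing ℬ
  idemA : IsIdem A
  idemB : IsIdem B
  lmodP : IsLMod A P ap
  rmodP : IsRMod B P pb
  bimodP : ∀ (a : A) (p : P) (b : B), pb (ap a p) b = ap a (pb p b)
  lmodQ : IsLMod B Q bq
  rmodQ : IsRMod A Q qa
  bimodQ : ∀ (b : B) (q : Q) (a : A), qa (bq b q) a = bq b (qa q a)
  unitalPl : IsUnitalL ap
  unitalPr : IsUnitalR pb
  unitalQl : IsUnitalL bq
  unitalQr : IsUnitalR qa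
  gradePl : IsGModL 𝒜 𝓟 ap
  gradePr : IsGModR ℬ 𝓟 pb
  gradeQl : IsGModL ℬ 𝒬 bq
  gradeQr : IsGModR 𝒜 𝒬 qa
  pr_addl : ∀ (p p' : P) (q : Q), pr (p + p') q = pr p q + pr p' q
  pr_addr : ∀ (p : P) (q q' : Q), pr p (q + q') = pr p q + pr p q'
  br_addl : ∀ (q q' : Q) (p : P), br (q + q') p = br q p + br q' p
  br_addr : ∀ (q : Q) (p p' : P), br q (p + p') = br q p + br q p'
  pr_bal : ∀ (p : P) (b : B) (q : Q), pr (pb p b) q = pr p (bq b q)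
  br_bal : ∀ (q : Q) (a : A) (p : P), br (qa q a) p = br q (ap a p)
  pr_linl : ∀ (a : A) (p : P) (q : Q), pr (ap a p) q = a * pr p q
  pr_linr : ∀ (p : P) (q : Q) (a : A), pr p (qa q a) = pr p q * a
  br_linl : ∀ (b : B) (q : Q) (p : P), br (bq b q) p = b * br q p
  br_linr : ∀ (q : Q) (p : P) (b : B), br q (pb p b) = br q p * b
  pr_graded : ∀ ⦃σ τ : Γ⦄ ⦃p : P⦄ ⦃q : Q⦄, p ∈ 𝓟 σ → q ∈ 𝒬 τ → pr p q ∈ 𝒜 (σ * τ)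
  br_graded : ∀ ⦃σ τ : Γ⦄ ⦃q : Q⦄ ⦃p : P⦄, q ∈ 𝒬 σ → p ∈ 𝓟 τ → br q p ∈ ℬ (σ * τ)
  assoc1 : ∀ (p' : P) (q : Q) (p : P), pb p' (br q p) = ap (pr p' q) p
  assoc2 : ∀ (q' : Q) (p : P) (q : Q), qa q' (pr p q) = bq (br q' p) q
  sur_pr : ∀ a : A, a ∈ AddSubgroup.closure {x : A | ∃ (p : P) (q : Q), x = pr p q}
  sur_br : ∀ b : B, b ∈ AddSubgroup.closure {x : B | ∃ (q : Q) (p : P), x = br q p}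

end Morita

universe u v

section Aux

variable {Γ : Type*} [Group Γ] {A M N P : Type*} [NonUnitalRing A]
  [AddCommGroup M] [AddCommGroup N] [AddCommGroup P]

/-- Composition of graded homomorphisms of all degrees. -/
lemma HOML_comp {sP : A → P → P} {sN : A → N → N} {sM : A → M → M}
    {𝓟 : Γ → AddSubgroup P} {𝒩 : Γ → AddSubgroup N} {ℳ : Γ → AddSubgroup M}
    {f : N →+ M} {g : P →+ N}
    (hf : f ∈ HOML sN sM 𝒩 ℳ) (hg : g ∈ HOML sP sN 𝓟 𝒩) :
    f.comp g ∈ HOML sP sM 𝓟 ℳ := by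
  induction hf using AddSubgroup.closure_induction with
  | mem f hf =>
    induction hg using AddSubgroup.closure_induction with
    | mem g hg =>
      obtain ⟨hflin, σ, hfdeg⟩ := hf
      obtain ⟨hglin, ρ, hgdeg⟩ := hg
      refine AddSubgroup.subset_closure ⟨fun a p => ?_, ρ * σ, fun τ p hp => ?_⟩
      · simp only [AddMonoidHom.comp_apply, hglin a p, hflin a (g p)]
      · have := hfdeg (τ * ρ) (g p) (hgdeg τ p hp)
        simpa [mul_assoc] using this
    | zero =>
      have : f.comp (0 : P →+ N) = 0 := by ext p; simp
      rw [this]; exact zero_mem _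
    | add g g' _ _ ihg ihg' =>
      have : f.comp (g + g') = f.comp g + f.comp g' := by ext p; simp
      rw [this]; exact add_mem ihg ihg'
    | neg g _ ihg =>
      have : f.comp (-g) = -(f.comp g) := by ext p; simp
      rw [this]; exact neg_mem ihg
  | zero =>
    have : (0 : N →+ M).comp g = 0 := by ext p; simp
    rw [this]; exact zero_mem _
  | add f f' _ _ ihf ihf' =>
    have : (f + f').comp g = f.comp g + f'.comp g := by ext p; simp
    rw [this]; exact add_mem ihf ihf'
  | neg f _ ihf =>
    have : (-f).comp g = -(f.comp g) := by ext p; simp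
    rw [this]; exact neg_mem ihf

/-- Part 1: `A` is a graded generator. -/
lemma A_is_generator {Γ : Type v} {A : Type u} [Group Γ] [DecidableEq Γ]
    [NonUnitalRing A] (𝒜 : Γ → AddSubgroup A)
    (hGA : IsGRing 𝒜)
    (M : Type u) [AddCommGroup M] (sM : A → M → M) (ℳ : Γ → AddSubgroup M)
    [DirectSum.Decomposition ℳ] (hLM : IsLMod A M sM) (hU : IsUnitalL sM)
    (hGM : IsGModL 𝒜 ℳ sM) (m : M) :
    m ∈ TraceL (fun a x : A => a * x) sM 𝒜 ℳ := by
  classical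
  -- Step A: for homogeneous m₀, the map a ↦ sM a m₀ is a graded homomorphism
  have stepA : ∀ (τ : Γ) (m₀ : M), m₀ ∈ ℳ τ → ∀ a : A,
      sM a m₀ ∈ TraceL (fun a x : A => a * x) sM 𝒜 ℳ := by
    intro τ m₀ hm₀ a
    set f : A →+ M := AddMonoidHom.mk' (fun a => sM a m₀)
      (fun a b => hLM.add_smul a b m₀) with hfdef
    have hfmem : f ∈ HOML (fun a x : A => a * x) sM 𝒜 ℳ := by
      refine AddSubgroup.subset_closure ⟨fun a x => ?_, τ, fun ρ a ha => ?_⟩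
      · exact hLM.mul_smul a x m₀
      · exact hGM ha hm₀
    exact AddSubgroup.subset_closure ⟨f, hfmem, a, rfl⟩
  -- Step B: for all m and a, sM a m is in the trace
  have stepB : ∀ (a : A) (m : M),
      sM a m ∈ TraceL (fun a x : A => a * x) sM 𝒜 ℳ := by
    intro a m
    set g : M →+ M := AddMonoidHom.mk' (sM a) (hLM.smul_add a) with hgdef
    have hkey : sM a m = ∑ τ ∈ (DirectSum.decompose ℳ m).support,
        sM a ((DirectSum.decompose ℳ m) τ : M) := by
      conv_lhs => rw [← DirectSum.sum_support_decompose ℳ m]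
      exact map_sum g _ _
    rw [hkey]
    exact sum_mem fun τ _ => stepA τ _ (SetLike.coe_mem _) a
  -- Step C: conclude by unitality
  have := hU m
  refine (AddSubgroup.closure_le _).mpr ?_ this
  rintro x ⟨a, m', rfl⟩
  exact stepB a m'

end Aux

/-- Let `A` be an idempotent torsion-free graded ring.
Then `A` is a graded generator of the category `A-gr` of unital torsion-free
graded left `A`-modules: `Tr_M(A) = M` for every such `M`.  Consequently,
`P ∈ A-gr` is a graded generator of `A-gr` if and only if `Tr_A(P) = A`. -/
theorem A_generator_and_criterion
    {Γ : Type v} {A : Type u} [Group Γ] [DecidableEq Γ] [NonUnitalRing A]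
    (𝒜 : Γ → AddSubgroup A) [DirectSum.Decomposition 𝒜]
    (hGA : IsGRing 𝒜) (hIdem : IsIdem A)
    (hAl : IsTorsionFreeL (fun a x : A => a * x))
    (hAr : IsTorsionFreeR (fun x a : A => x * a)) :
    -- `A` is a graded generator of `A-gr`
    (∀ (M : Type u) [AddCommGroup M], ∀ (sM : A → M → M) (ℳ : Γ → AddSubgroup M)
      [DirectSum.Decomposition ℳ], IsLMod A M sM → IsUnitalL sM →
      IsTorsionFreeL sM → IsGModL 𝒜 ℳ sM →
      ∀ m : M, m ∈ TraceL (fun a x : A => a * x) sM 𝒜 ℳ) ∧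
    -- `P ∈ A-gr` is a graded generator of `A-gr` iff `Tr_A(P) = A`
    (∀ (P : Type u) [AddCommGroup P], ∀ (sP : A → P → P) (𝓟 : Γ → AddSubgroup P)
      [DirectSum.Decomposition 𝓟], IsLMod A P sP → IsUnitalL sP →
      IsTorsionFreeL sP → IsGModL 𝒜 𝓟 sP →
      (((∀ (M : Type u) [AddCommGroup M], ∀ (sM : A → M → M) (ℳ : Γ → AddSubgroup M)
        [DirectSum.Decomposition ℳ], IsLMod A M sM → IsUnitalL sM →
        IsTorsionFreeL sM → IsGModL 𝒜 ℳ sM →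
        ∀ m : M, m ∈ TraceL sP sM 𝓟 ℳ)) ↔
      (∀ a : A, a ∈ TraceL sP (fun a x : A => a * x) 𝓟 𝒜))) := by
  have hAlmod : IsLMod A A (fun a x : A => a * x) :=
    ⟨fun a m n => mul_add a m n, fun a b m => add_mul a b m, fun a b m => mul_assoc a b m⟩
  have hAunital : IsUnitalL (fun a x : A => a * x) := hIdem
  have gen : ∀ (M : Type u) [AddCommGroup M], ∀ (sM : A → M → M) (ℳ : Γ → AddSubgroup M)
      [DirectSum.Decomposition ℳ], IsLMod A M sM → IsUnitalL sM →
      IsTorsionFreeL sM → IsGModL 𝒜 ℳ sM →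
      ∀ m : M, m ∈ TraceL (fun a x : A => a * x) sM 𝒜 ℳ := by
    intro M _ sM ℳ _ hLM hU _ hGM m
    exact A_is_generator 𝒜 hGA M sM ℳ hLM hU hGM m
  refine ⟨gen, ?_⟩
  intro P _ sP 𝓟 _ hLP hUP hTP hGP
  constructor
  · intro h
    exact h A (fun a x : A => a * x) 𝒜 hAlmod hAunital hAl hGA
  · intro hTr
    intro M _ sM ℳ _ hLM hU hT hGM m
    -- m is in the trace of A; each generator f a factors through P
    have hmA := gen M sM ℳ hLM hU hT hGM m
    refine (AddSubgroup.closure_le _).mpr ?_ hmA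
    rintro x ⟨f, hf, a, rfl⟩
    -- a ∈ Tr_A(P); push forward along f
    have ha := hTr a
    clear hmA
    induction ha using AddSubgroup.closure_induction with
    | mem x hx =>
      obtain ⟨g, hg, p, rfl⟩ := hx
      exact AddSubgroup.subset_closure ⟨f.comp g, HOML_comp hf hg, p, rfl⟩
    | zero => simpa using zero_mem (TraceL sP sM 𝓟 ℳ)
    | add x y _ _ ihx ihy => simpa using add_mem ihx ihy
    | neg x _ ihx => simpa using neg_mem ihx
end

section
/- Let (A,B,P,Q,μ,ν) be a graded Morita context with idempotent torsion-free graded rings, torsion-free unital bimodules, and surjective trace maps. Then there are graded (B,A)-bimodule isomorphisms Q ≅ B·HOM_A(P,A) and Q ≅ HOM_B(P,B)·A, and graded (A,B)-bimodule isomorphisms P ≅ A·HOM_B(Q,B) and P ≅ HOM_A(Q,A)·B. -/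
/-!
Common infrastructure: non-unital (graded) rings, non-unital graded modules
(given by explicit action functions), graded homomorphisms of all degrees,
traces, torsion submodules, balanced tensor products, and graded Morita
contexts, following Dokuchaev–Simón, "Graded Equivalence for Graded
Idempotent Rings".
-/

open DirectSum

universe u v

variable {Γ : Type v} {A B P Q : Type u} [Group Γ] [DecidableEq Γ]
    [NonUnitalRing A] [NonUnitalRing B] [AddCommGroup P] [AddCommGroup Q]
    {𝒜 : Γ → AddSubgroup A} {ℬ : Γ → AddSubgroup B}
    {𝓟 : Γ → AddSubgroup P} {𝒬 : Γ → AddSubgroup Q}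
    {ap : A → P → P} {pb : P → B → P} {bq : B → Q → Q} {qa : Q → A → Q}
    {pr : P → Q → A} {br : Q → P → B}

/-- `q ↦ ⟨-,q⟩ : P →+ A`. -/
def toBHOMPA (ctx : GMoritaCtx Γ A B P Q 𝒜 ℬ 𝓟 𝒬 ap pb bq qa pr br) (q : Q) : P →+ A :=
  AddMonoidHom.mk' (fun p => pr p q) (fun p p' => ctx.pr_addl p p' q)

/-- `q ↦ [q,-] : P →+ B`. -/
def toHOMPBA (ctx : GMoritaCtx Γ A B P Q 𝒜 ℬ 𝓟 𝒬 ap pb bq qa pr br) (q : Q) : P →+ B :=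
  AddMonoidHom.mk' (fun p => br q p) (fun p p' => ctx.br_addr q p p')

/-- `p ↦ [-,p] : Q →+ B`. -/
def toAHOMQB (ctx : GMoritaCtx Γ A B P Q 𝒜 ℬ 𝓟 𝒬 ap pb bq qa pr br) (p : P) : Q →+ B :=
  AddMonoidHom.mk' (fun q => br q p) (fun q q' => ctx.br_addl q q' p)

/-- `p ↦ ⟨p,-⟩ : Q →+ A`. -/
def toHOMQAB (ctx : GMoritaCtx Γ A B P Q 𝒜 ℬ 𝓟 𝒬 ap pb bq qa pr br) (p : P) : Q →+ A :=
  AddMonoidHom.mk' (fun q => pr p q) (fun q q' => ctx.pr_addr p q q')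

section Master

open AddSubgroup

lemma mem_closure_homog {ι M : Type*} [DecidableEq ι] [AddCommGroup M]
    (ℳ : ι → AddSubgroup M) [DirectSum.Decomposition ℳ] (m : M) :
    m ∈ AddSubgroup.closure {x : M | ∃ i, x ∈ ℳ i} := by
  classical
  rw [← DirectSum.sum_support_decompose ℳ m]
  exact AddSubgroup.sum_mem _ fun i _ => AddSubgroup.subset_closure ⟨i, SetLike.coe_mem _⟩

variable {Γ A B P Q : Type*} [Group Γ] [NonUnitalRing A] [NonUnitalRing B]
  [AddCommGroup P] [AddCommGroup Q]

lemma masterL (𝒜 : Γ → AddSubgroup A) (𝓟 : Γ → AddSubgroup P) (𝒬 : Γ → AddSubgroup Q)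
    (ap : A → P → P) (pb : P → B → P) (bq : B → Q → Q) (qa : Q → A → Q)
    (pr : P → Q → A) (br : Q → P → B)
    (Φ : Q → P →+ A) (hΦ : ∀ q p, Φ q p = pr p q)
    (pr_addr : ∀ (p : P) (q q' : Q), pr p (q + q') = pr p q + pr p q')
    (pr_bal : ∀ (p : P) (b : B) (q : Q), pr (pb p b) q = pr p (bq b q))
    (pr_linl : ∀ (a : A) (p : P) (q : Q), pr (ap a p) q = a * pr p q)
    (pr_linr : ∀ (p : P) (q : Q) (a : A), pr p (qa q a) = pr p q * a)
    (pr_graded : ∀ ⦃σ τ : Γ⦄ ⦃p : P⦄ ⦃q : Q⦄, p ∈ 𝓟 σ → q ∈ 𝒬 τ → pr p q ∈ 𝒜 (σ * τ))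
    (assoc1 : ∀ (p' : P) (q : Q) (p : P), pb p' (br q p) = ap (pr p' q) p)
    (assoc2 : ∀ (q' : Q) (p : P) (q : Q), qa q' (pr p q) = bq (br q' p) q)
    (lmodQ : IsLMod B Q bq) (rmodQ : IsRMod A Q qa) (rmodP : IsRMod B P pb)
    (unitalQl : IsUnitalL bq) (hQl : IsTorsionFreeL bq)
    (sur_br : ∀ b : B, b ∈ AddSubgroup.closure {x : B | ∃ (q : Q) (p : P), x = br q p})
    (hdec : ∀ q : Q, q ∈ AddSubgroup.closure {x : Q | ∃ σ, x ∈ 𝒬 σ}) :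
    (∀ q : Q, Φ q ∈
        smulHOM B (HOML ap (fun a x : A => a * x) 𝓟 𝒜) (fun (b : B) (p : P) => pb p b)) ∧
      Function.Injective Φ ∧
      (∀ σ : Γ, ∀ q ∈ 𝒬 σ, IsDegL 𝓟 𝒜 σ (Φ q)) ∧
      (∀ g ∈ smulHOM B (HOML ap (fun a x : A => a * x) 𝓟 𝒜) (fun (b : B) (p : P) => pb p b),
        ∃ q : Q, Φ q = g) := by
  -- bundle Φ as an additive map
  have phi_add : ∀ q q' : Q, Φ (q + q') = Φ q + Φ q' := fun q q' =>
    AddMonoidHom.ext fun p => by simp [hΦ, pr_addr]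
  set Φ' : Q →+ (P →+ A) := AddMonoidHom.mk' Φ phi_add with hΦ'
  have hΦ'c : ∀ q, Φ' q = Φ q := fun _ => rfl
  -- each Φ q lies in HOML
  have claimA : ∀ q : Q, Φ q ∈ HOML ap (fun a x : A => a * x) 𝓟 𝒜 := by
    intro q
    have hle : AddSubgroup.closure {x : Q | ∃ σ, x ∈ 𝒬 σ} ≤
        (HOML ap (fun a x : A => a * x) 𝓟 𝒜).comap Φ' := by
      rw [closure_le]
      rintro x ⟨σ, hx⟩
      refine AddSubgroup.subset_closure ⟨?_, σ, ?_⟩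
      · intro a p
        simp only [hΦ'c, hΦ]
        exact pr_linl a p x
      · intro τ p hp
        simpa only [hΦ'c, hΦ] using pr_graded hp hx
    exact hle (hdec q)
  -- membership
  have mem1 : ∀ q : Q, Φ q ∈
      smulHOM B (HOML ap (fun a x : A => a * x) 𝓟 𝒜) (fun (b : B) (p : P) => pb p b) := by
    intro q
    have hle : AddSubgroup.closure {x : Q | ∃ (b : B) (m' : Q), x = bq b m'} ≤
        (smulHOM B (HOML ap (fun a x : A => a * x) 𝓟 𝒜)
          (fun (b : B) (p : P) => pb p b)).comap Φ' := by
      rw [closure_le]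
      rintro x ⟨b, m', rfl⟩
      refine AddSubgroup.subset_closure ⟨b, Φ m', claimA m', fun p => ?_⟩
      simp only [hΦ'c, hΦ]
      exact (pr_bal p b m').symm
    exact hle (unitalQl q)
  -- injectivity
  have qa_zero : ∀ q' : Q, qa q' 0 = 0 := by
    intro q'
    have h := rmodQ.smul_add q' 0 0
    rw [add_zero] at h
    exact left_eq_add.mp h
  have ker0 : ∀ q : Q, Φ q = 0 → q = 0 := by
    intro q hq0
    have hpq : ∀ p : P, pr p q = 0 := fun p => by
      rw [← hΦ q p, hq0]; rfl
    refine hQl q ?_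
    intro b
    have hle : AddSubgroup.closure {x : B | ∃ (q' : Q) (p : P), x = br q' p} ≤
        (AddMonoidHom.mk' (fun b => bq b q) (fun x y => lmodQ.add_smul x y q)).ker := by
      rw [closure_le]
      rintro x ⟨q', p, rfl⟩
      show bq (br q' p) q = 0
      rw [← assoc2, hpq, qa_zero]
    exact hle (sur_br b)
  have inj : Function.Injective Φ := by
    intro q q' h
    have h2 : Φ' (q - q') = 0 := by
      rw [map_sub, hΦ'c, hΦ'c, h, sub_self]
    have := ker0 (q - q') h2
    exact sub_eq_zero.mp this
  -- degree
  have deg : ∀ σ : Γ, ∀ q ∈ 𝒬 σ, IsDegL 𝓟 𝒜 σ (Φ q) := by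
    intro σ q hq τ p hp
    simpa only [hΦ] using pr_graded hp hq
  -- surjectivity
  have sur : ∀ g ∈ smulHOM B (HOML ap (fun a x : A => a * x) 𝓟 𝒜)
      (fun (b : B) (p : P) => pb p b), ∃ q : Q, Φ q = g := by
    have hle : smulHOM B (HOML ap (fun a x : A => a * x) 𝓟 𝒜)
        (fun (b : B) (p : P) => pb p b) ≤ Φ'.range := by
      rw [smulHOM, closure_le]
      rintro g ⟨b, f, hf, hg⟩
      -- f is A-linear
      have hlin : ∀ (a : A) (m : P), f (ap a m) = a * f m := by
        refine AddSubgroup.closure_induction ?_ ?_ ?_ ?_ hf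
        · rintro x ⟨hx, -⟩; exact fun a m => hx a m
        · intro a m; simp
        · intro x y _ _ hx hy a m
          simp [hx, hy, mul_add]
        · intro x _ hx a m
          simp [hx]
      -- the map b ↦ (m ↦ f (pb m b)) is additive
      set χ : B →+ (P →+ A) := AddMonoidHom.mk'
        (fun b => AddMonoidHom.mk' (fun m => f (pb m b))
          (fun m m' => by
            show f (pb (m + m') b) = f (pb m b) + f (pb m' b)
            rw [rmodP.add_smul, map_add]))
        (fun b b' => AddMonoidHom.ext fun m => by
          show f (pb m (b + b')) = f (pb m b) + f (pb m b')
          rw [rmodP.smul_add, map_add]) with hχ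
      have hb : b ∈ Φ'.range.comap χ := by
        have hle2 : AddSubgroup.closure {x : B | ∃ (q' : Q) (p : P), x = br q' p} ≤
            Φ'.range.comap χ := by
          rw [closure_le]
          rintro x ⟨q', p', rfl⟩
          refine ⟨qa q' (f p'), ?_⟩
          ext m
          show Φ (qa q' (f p')) m = f (pb m (br q' p'))
          rw [hΦ, assoc1, hlin, pr_linr]
        exact hle2 (sur_br b)
      obtain ⟨q, hq⟩ := hb
      refine ⟨q, ?_⟩
      ext m
      show Φ q m = g m
      have h3 : Φ q m = f (pb m b) := congrArg (fun h => h m) hq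
      rw [h3, hg m]
    intro g hg
    exact hle hg
  exact ⟨mem1, inj, deg, sur⟩

lemma masterR (ℬ : Γ → AddSubgroup B) (𝓟 : Γ → AddSubgroup P) (𝒬 : Γ → AddSubgroup Q)
    (ap : A → P → P) (pb : P → B → P) (bq : B → Q → Q) (qa : Q → A → Q)
    (pr : P → Q → A) (br : Q → P → B)
    (Φ : Q → P →+ B) (hΦ : ∀ q p, Φ q p = br q p)
    (br_addl : ∀ (q q' : Q) (p : P), br (q + q') p = br q p + br q' p)
    (br_bal : ∀ (q : Q) (a : A) (p : P), br (qa q a) p = br q (ap a p))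
    (br_linl : ∀ (b : B) (q : Q) (p : P), br (bq b q) p = b * br q p)
    (br_linr : ∀ (q : Q) (p : P) (b : B), br q (pb p b) = br q p * b)
    (br_graded : ∀ ⦃σ τ : Γ⦄ ⦃q : Q⦄ ⦃p : P⦄, q ∈ 𝒬 σ → p ∈ 𝓟 τ → br q p ∈ ℬ (σ * τ))
    (assoc1 : ∀ (p' : P) (q : Q) (p : P), pb p' (br q p) = ap (pr p' q) p)
    (assoc2 : ∀ (q' : Q) (p : P) (q : Q), qa q' (pr p q) = bq (br q' p) q)
    (lmodQ : IsLMod B Q bq) (rmodQ : IsRMod A Q qa) (lmodP : IsLMod A P ap)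
    (unitalQr : IsUnitalR qa) (hQr : IsTorsionFreeR qa)
    (sur_pr : ∀ a : A, a ∈ AddSubgroup.closure {x : A | ∃ (p : P) (q : Q), x = pr p q})
    (hdec : ∀ q : Q, q ∈ AddSubgroup.closure {x : Q | ∃ σ, x ∈ 𝒬 σ}) :
    (∀ q : Q, Φ q ∈
        smulHOM A (HOMR pb (fun b b' : B => b * b') 𝓟 ℬ) (fun (a : A) (p : P) => ap a p)) ∧
      Function.Injective Φ ∧
      (∀ σ : Γ, ∀ q ∈ 𝒬 σ, IsDegR 𝓟 ℬ σ (Φ q)) ∧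
      (∀ g ∈ smulHOM A (HOMR pb (fun b b' : B => b * b') 𝓟 ℬ) (fun (a : A) (p : P) => ap a p),
        ∃ q : Q, Φ q = g) := by
  have phi_add : ∀ q q' : Q, Φ (q + q') = Φ q + Φ q' := fun q q' =>
    AddMonoidHom.ext fun p => by simp [hΦ, br_addl]
  set Φ' : Q →+ (P →+ B) := AddMonoidHom.mk' Φ phi_add with hΦ'
  have hΦ'c : ∀ q, Φ' q = Φ q := fun _ => rfl
  have claimA : ∀ q : Q, Φ q ∈ HOMR pb (fun b b' : B => b * b') 𝓟 ℬ := by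
    intro q
    have hle : AddSubgroup.closure {x : Q | ∃ σ, x ∈ 𝒬 σ} ≤
        (HOMR pb (fun b b' : B => b * b') 𝓟 ℬ).comap Φ' := by
      rw [AddSubgroup.closure_le]
      rintro x ⟨σ, hx⟩
      refine AddSubgroup.subset_closure ⟨?_, σ, ?_⟩
      · intro p b
        simp only [hΦ'c, hΦ]
        exact br_linr x p b
      · intro τ p hp
        simpa only [hΦ'c, hΦ] using br_graded hx hp
    exact hle (hdec q)
  have mem1 : ∀ q : Q, Φ q ∈
      smulHOM A (HOMR pb (fun b b' : B => b * b') 𝓟 ℬ) (fun (a : A) (p : P) => ap a p) := by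
    intro q
    have hle : AddSubgroup.closure {x : Q | ∃ (m' : Q) (a : A), x = qa m' a} ≤
        (smulHOM A (HOMR pb (fun b b' : B => b * b') 𝓟 ℬ)
          (fun (a : A) (p : P) => ap a p)).comap Φ' := by
      rw [AddSubgroup.closure_le]
      rintro x ⟨m', a, rfl⟩
      refine AddSubgroup.subset_closure ⟨a, Φ m', claimA m', fun p => ?_⟩
      simp only [hΦ'c, hΦ]
      exact br_bal m' a p
    exact hle (unitalQr q)
  have bq_zero : ∀ q' : Q, bq 0 q' = 0 := by
    intro q'
    have h := lmodQ.add_smul 0 0 q'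
    rw [add_zero] at h
    exact left_eq_add.mp h
  have ker0 : ∀ q : Q, Φ q = 0 → q = 0 := by
    intro q hq0
    have hpq : ∀ p : P, br q p = 0 := fun p => by
      rw [← hΦ q p, hq0]; rfl
    refine hQr q ?_
    intro a
    have hle : AddSubgroup.closure {x : A | ∃ (p : P) (q' : Q), x = pr p q'} ≤
        (AddMonoidHom.mk' (fun a => qa q a) (fun x y => rmodQ.smul_add q x y)).ker := by
      rw [AddSubgroup.closure_le]
      rintro x ⟨p, q', rfl⟩
      show qa q (pr p q') = 0
      rw [assoc2, hpq, bq_zero]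
    exact hle (sur_pr a)
  have inj : Function.Injective Φ := by
    intro q q' h
    have h2 : Φ' (q - q') = 0 := by
      rw [map_sub, hΦ'c, hΦ'c, h, sub_self]
    exact sub_eq_zero.mp (ker0 (q - q') h2)
  have deg : ∀ σ : Γ, ∀ q ∈ 𝒬 σ, IsDegR 𝓟 ℬ σ (Φ q) := by
    intro σ q hq τ p hp
    simpa only [hΦ] using br_graded hq hp
  have sur : ∀ g ∈ smulHOM A (HOMR pb (fun b b' : B => b * b') 𝓟 ℬ)
      (fun (a : A) (p : P) => ap a p), ∃ q : Q, Φ q = g := by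
    have hle : smulHOM A (HOMR pb (fun b b' : B => b * b') 𝓟 ℬ)
        (fun (a : A) (p : P) => ap a p) ≤ Φ'.range := by
      rw [smulHOM, AddSubgroup.closure_le]
      rintro g ⟨a, f, hf, hg⟩
      have hlin : ∀ (m : P) (b : B), f (pb m b) = f m * b := by
        refine AddSubgroup.closure_induction ?_ ?_ ?_ ?_ hf
        · rintro x ⟨hx, -⟩; exact fun m b => hx m b
        · intro m b; simp
        · intro x y _ _ hx hy m b
          simp [hx, hy, add_mul]
        · intro x _ hx m b
          simp [hx]
      set χ : A →+ (P →+ B) := AddMonoidHom.mk'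
        (fun a => AddMonoidHom.mk' (fun m => f (ap a m))
          (fun m m' => by
            show f (ap a (m + m')) = f (ap a m) + f (ap a m')
            rw [lmodP.smul_add, map_add]))
        (fun a a' => AddMonoidHom.ext fun m => by
          show f (ap (a + a') m) = f (ap a m) + f (ap a' m)
          rw [lmodP.add_smul, map_add]) with hχ
      have hb : a ∈ Φ'.range.comap χ := by
        have hle2 : AddSubgroup.closure {x : A | ∃ (p : P) (q' : Q), x = pr p q'} ≤
            Φ'.range.comap χ := by
          rw [AddSubgroup.closure_le]
          rintro x ⟨p', q', rfl⟩
          refine ⟨bq (f p') q', ?_⟩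
          ext m
          show Φ (bq (f p') q') m = f (ap (pr p' q') m)
          rw [hΦ, ← assoc1, hlin, br_linl]
        exact hle2 (sur_pr a)
      obtain ⟨q, hq⟩ := hb
      refine ⟨q, ?_⟩
      ext m
      show Φ q m = g m
      have h3 : Φ q m = f (ap a m) := congrArg (fun h => h m) hq
      rw [h3, hg m]
    intro g hg
    exact hle hg
  exact ⟨mem1, inj, deg, sur⟩

end Master

/-- For a graded Morita context with idempotent torsion-free
graded rings, torsion-free unital bimodules and surjective trace maps, there
are graded bimodule isomorphisms `Q ≅ B·HOM_A(P,A)` (via `q ↦ ⟨-,q⟩`),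
`Q ≅ HOM_B(P,B)·A` (via `q ↦ [q,-]`), `P ≅ A·HOM_B(Q,B)` (via `p ↦ [-,p]`)
and `P ≅ HOM_A(Q,A)·B` (via `p ↦ ⟨p,-⟩`): each canonical map is injective,
graded of degree `e`, and maps onto the corresponding subgroup. -/
theorem canonical_bimodule_isomorphisms
    [DirectSum.Decomposition 𝒜] [DirectSum.Decomposition ℬ]
    [DirectSum.Decomposition 𝓟] [DirectSum.Decomposition 𝒬]
    (ctx : GMoritaCtx Γ A B P Q 𝒜 ℬ 𝓟 𝒬 ap pb bq qa pr br)
    (hAl : IsTorsionFreeL (fun a x : A => a * x))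
    (hAr : IsTorsionFreeR (fun x a : A => x * a))
    (hBl : IsTorsionFreeL (fun b x : B => b * x))
    (hBr : IsTorsionFreeR (fun x b : B => x * b))
    (hPl : IsTorsionFreeL ap) (hPr : IsTorsionFreeR pb)
    (hQl : IsTorsionFreeL bq) (hQr : IsTorsionFreeR qa) :
    -- `Q ≅ B·HOM_A(P,A)`
    ((∀ q : Q, toBHOMPA ctx q ∈
        smulHOM B (HOML ap (fun a x : A => a * x) 𝓟 𝒜) (fun (b : B) (p : P) => pb p b)) ∧
      Function.Injective (toBHOMPA ctx) ∧
      (∀ σ : Γ, ∀ q ∈ 𝒬 σ, IsDegL 𝓟 𝒜 σ (toBHOMPA ctx q)) ∧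
      (∀ g ∈ smulHOM B (HOML ap (fun a x : A => a * x) 𝓟 𝒜) (fun (b : B) (p : P) => pb p b),
        ∃ q : Q, toBHOMPA ctx q = g)) ∧
    -- `Q ≅ HOM_B(P,B)·A`
    ((∀ q : Q, toHOMPBA ctx q ∈
        smulHOM A (HOMR pb (fun b b' : B => b * b') 𝓟 ℬ) (fun (a : A) (p : P) => ap a p)) ∧
      Function.Injective (toHOMPBA ctx) ∧
      (∀ σ : Γ, ∀ q ∈ 𝒬 σ, IsDegR 𝓟 ℬ σ (toHOMPBA ctx q)) ∧
      (∀ g ∈ smulHOM A (HOMR pb (fun b b' : B => b * b') 𝓟 ℬ) (fun (a : A) (p : P) => ap a p),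
        ∃ q : Q, toHOMPBA ctx q = g)) ∧
    -- `P ≅ A·HOM_B(Q,B)`
    ((∀ p : P, toAHOMQB ctx p ∈
        smulHOM A (HOML bq (fun b x : B => b * x) 𝒬 ℬ) (fun (a : A) (q : Q) => qa q a)) ∧
      Function.Injective (toAHOMQB ctx) ∧
      (∀ σ : Γ, ∀ p ∈ 𝓟 σ, IsDegL 𝒬 ℬ σ (toAHOMQB ctx p)) ∧
      (∀ g ∈ smulHOM A (HOML bq (fun b x : B => b * x) 𝒬 ℬ) (fun (a : A) (q : Q) => qa q a),
        ∃ p : P, toAHOMQB ctx p = g)) ∧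
    -- `P ≅ HOM_A(Q,A)·B`
    ((∀ p : P, toHOMQAB ctx p ∈
        smulHOM B (HOMR qa (fun a a' : A => a * a') 𝒬 𝒜) (fun (b : B) (q : Q) => bq b q)) ∧
      Function.Injective (toHOMQAB ctx) ∧
      (∀ σ : Γ, ∀ p ∈ 𝓟 σ, IsDegR 𝒬 𝒜 σ (toHOMQAB ctx p)) ∧
      (∀ g ∈ smulHOM B (HOMR qa (fun a a' : A => a * a') 𝒬 𝒜) (fun (b : B) (q : Q) => bq b q),
        ∃ p : P, toHOMQAB ctx p = g)) := by
  refine ⟨?_, ?_, ?_, ?_⟩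
  · exact masterL 𝒜 𝓟 𝒬 ap pb bq qa pr br (toBHOMPA ctx) (fun q p => rfl)
      ctx.pr_addr ctx.pr_bal ctx.pr_linl ctx.pr_linr ctx.pr_graded ctx.assoc1 ctx.assoc2
      ctx.lmodQ ctx.rmodQ ctx.rmodP ctx.unitalQl hQl ctx.sur_br
      (fun q => mem_closure_homog 𝒬 q)
  · exact masterR ℬ 𝓟 𝒬 ap pb bq qa pr br (toHOMPBA ctx) (fun q p => rfl)
      ctx.br_addl ctx.br_bal ctx.br_linl ctx.br_linr ctx.br_graded ctx.assoc1 ctx.assoc2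
      ctx.lmodQ ctx.rmodQ ctx.lmodP ctx.unitalQr hQr ctx.sur_pr
      (fun q => mem_closure_homog 𝒬 q)
  · exact masterL ℬ 𝒬 𝓟 bq qa ap pb br pr (toAHOMQB ctx) (fun p q => rfl)
      ctx.br_addr ctx.br_bal ctx.br_linl ctx.br_linr ctx.br_graded ctx.assoc2 ctx.assoc1
      ctx.lmodP ctx.rmodP ctx.rmodQ ctx.unitalPl hPl ctx.sur_pr
      (fun p => mem_closure_homog 𝓟 p)
  · exact masterR 𝒜 𝒬 𝓟 bq qa ap pb br pr (toHOMQAB ctx) (fun p q => rfl)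
      ctx.pr_addl ctx.pr_bal ctx.pr_linl ctx.pr_linr ctx.pr_graded ctx.assoc2 ctx.assoc1
      ctx.lmodP ctx.rmodP ctx.lmodQ ctx.unitalPr hPr ctx.sur_br
      (fun p => mem_closure_homog 𝓟 p)
end

section
/- Let (A,B,P,Q,μ,ν) be a graded Morita context with idempotent (not necessarily torsion-free) graded rings, unital bimodules and surjective trace maps, and let U be a unital torsion-free graded left A-module. Then the natural map δ : Q ⊗_A U → B·HOM_A(P,U) determined by q⊗u ↦ (p ↦ ⟨p,q⟩u) is surjective with left B-torsion kernel; consequently (Q⊗_A U)/t_B(Q⊗_A U) ≅ B·HOM_A(P,U) as graded left B-modules. -/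
/-!
Common infrastructure: non-unital (graded) rings, non-unital graded modules
(given by explicit action functions), graded homomorphisms of all degrees,
traces, torsion submodules, balanced tensor products, and graded Morita
contexts, following Dokuchaev–Simón, "Graded Equivalence for Graded
Idempotent Rings".
-/

open DirectSum

universe u v

section TenAux

variable {B P Q : Type*} [AddCommGroup P] [AddCommGroup Q]
  {rs : P → B → P} {ls : B → Q → Q}

lemma tmul_add_left (p p' : P) (q : Q) :
    (tmul (p + p') q : Ten B rs ls) = tmul p q + tmul p' q := by
  unfold tmul
  rw [← QuotientAddGroup.mk_add]
  refine QuotientAddGroup.eq.mpr ?_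
  have h : (FreeAbelianGroup.of (p + p', q) - FreeAbelianGroup.of (p, q)
      - FreeAbelianGroup.of (p', q)) ∈ TenRel B rs ls :=
    AddSubgroup.subset_closure (Or.inl (Or.inl ⟨p, p', q, rfl⟩))
  have h2 := neg_mem h
  convert h2 using 1
  abel

lemma tmul_add_right (p : P) (q q' : Q) :
    (tmul p (q + q') : Ten B rs ls) = tmul p q + tmul p q' := by
  unfold tmul
  rw [← QuotientAddGroup.mk_add]
  refine QuotientAddGroup.eq.mpr ?_
  have h : (FreeAbelianGroup.of (p, q + q') - FreeAbelianGroup.of (p, q)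
      - FreeAbelianGroup.of (p, q')) ∈ TenRel B rs ls :=
    AddSubgroup.subset_closure (Or.inl (Or.inr ⟨p, q, q', rfl⟩))
  have h2 := neg_mem h
  convert h2 using 1
  abel

lemma tmul_bal (p : P) (b : B) (q : Q) :
    (tmul (rs p b) q : Ten B rs ls) = tmul p (ls b q) := by
  unfold tmul
  refine QuotientAddGroup.eq.mpr ?_
  have h : (FreeAbelianGroup.of (rs p b, q) - FreeAbelianGroup.of (p, ls b q))
      ∈ TenRel B rs ls :=
    AddSubgroup.subset_closure (Or.inr ⟨p, b, q, rfl⟩)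
  have h2 := neg_mem h
  convert h2 using 1
  abel

lemma tmul_zero_left (q : Q) : (tmul (0 : P) q : Ten B rs ls) = 0 := by
  have h := tmul_add_left (rs := rs) (ls := ls) (0 : P) 0 q
  rw [add_zero] at h
  exact left_eq_add.mp h

lemma tmul_zero_right (p : P) : (tmul p (0 : Q) : Ten B rs ls) = 0 := by
  have h := tmul_add_right (rs := rs) (ls := ls) p (0 : Q) 0
  rw [add_zero] at h
  exact left_eq_add.mp h

lemma tmul_neg_left (p : P) (q : Q) :
    (tmul (-p) q : Ten B rs ls) = -(tmul p q) := by
  have h := tmul_add_left (rs := rs) (ls := ls) p (-p) q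
  rw [add_neg_cancel, tmul_zero_left] at h
  rw [add_comm] at h
  exact eq_neg_of_add_eq_zero_left h.symm

lemma tmul_neg_right (p : P) (q : Q) :
    (tmul p (-q) : Ten B rs ls) = -(tmul p q) := by
  have h := tmul_add_right (rs := rs) (ls := ls) p q (-q)
  rw [add_neg_cancel, tmul_zero_right] at h
  rw [add_comm] at h
  exact eq_neg_of_add_eq_zero_left h.symm

/-- For a fixed right factor `q`, `p ↦ p ⊗ q` is additive. -/
def tmulR (q : Q) : P →+ Ten B rs ls :=
  AddMonoidHom.mk' (fun p => tmul p q) (fun a b => tmul_add_left a b q)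

/-- For a fixed left factor `p`, `q ↦ p ⊗ q` is additive. -/
def tmulL (p : P) : Q →+ Ten B rs ls :=
  AddMonoidHom.mk' (fun q => tmul p q) (tmul_add_right p)

/-- Induction principle for the balanced tensor product. -/
lemma Ten_ind {C : Ten B rs ls → Prop} (h0 : C 0)
    (hg : ∀ p q, C (tmul p q)) (hneg : ∀ x, C x → C (-x))
    (hadd : ∀ x y, C x → C y → C (x + y)) : ∀ t, C t := by
  intro t
  obtain ⟨z, rfl⟩ := QuotientAddGroup.mk_surjective t
  induction z using FreeAbelianGroup.induction_on with
  | zero => exact h0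
  | of x => exact hg x.1 x.2
  | neg x _ => rw [QuotientAddGroup.mk_neg]; exact hneg _ (hg x.1 x.2)
  | add x y hx hy => rw [QuotientAddGroup.mk_add]; exact hadd _ _ hx hy

end TenAux

section ModAux

variable {A M : Type*} [NonUnitalRing A] [AddCommGroup M]

lemma IsLMod.smul_zero'' {s : A → M → M} (h : IsLMod A M s) (a : A) : s a 0 = 0 := by
  have h2 := h.smul_add a 0 0
  rw [add_zero] at h2
  exact left_eq_add.mp h2

lemma IsLMod.smul_neg'' {s : A → M → M} (h : IsLMod A M s) (a : A) (m : M) :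
    s a (-m) = -(s a m) := by
  have h2 := h.smul_add a m (-m)
  rw [add_neg_cancel, h.smul_zero''] at h2
  rw [add_comm] at h2
  exact eq_neg_of_add_eq_zero_left h2.symm

lemma IsLMod.zero_smul'' {s : A → M → M} (h : IsLMod A M s) (m : M) : s 0 m = 0 := by
  have h2 := h.add_smul 0 0 m
  rw [add_zero] at h2
  exact left_eq_add.mp h2

lemma IsRMod.smul_zero'' {s : M → A → M} (h : IsRMod A M s) (m : M) : s m 0 = 0 := by
  have h2 := h.smul_add m 0 0
  rw [add_zero] at h2
  exact left_eq_add.mp h2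

lemma IsRMod.smul_neg'' {s : M → A → M} (h : IsRMod A M s) (m : M) (a : A) :
    s m (-a) = -(s m a) := by
  have h2 := h.smul_add m a (-a)
  rw [add_neg_cancel, h.smul_zero''] at h2
  rw [add_comm] at h2
  exact eq_neg_of_add_eq_zero_left h2.symm

end ModAux



/-- Let `(A,B,P,Q,μ,ν)` be a graded Morita context with
idempotent (not necessarily torsion-free) graded rings, unital bimodules and
surjective trace maps, and let `U` be a unital torsion-free graded left
`A`-module.  Then the natural map `δ : Q ⊗_A U → B·HOM_A(P,U)`,
`q⊗u ↦ (p ↦ ⟨p,q⟩u)`, is surjective and its kernel is exactly the left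
`B`-torsion part of `Q ⊗_A U`; consequently
`(Q ⊗_A U)/t_B(Q ⊗_A U) ≅ B·HOM_A(P,U)` as graded left `B`-modules. -/
theorem delta_epimorphism_kernel_torsion
    {Γ : Type v} {A B P Q U : Type u} [Group Γ] [DecidableEq Γ]
    [NonUnitalRing A] [NonUnitalRing B] [AddCommGroup P] [AddCommGroup Q]
    [AddCommGroup U]
    (𝒜 : Γ → AddSubgroup A) (ℬ : Γ → AddSubgroup B)
    (𝓟 : Γ → AddSubgroup P) (𝒬 : Γ → AddSubgroup Q) (𝒰 : Γ → AddSubgroup U)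
    [DirectSum.Decomposition 𝒜] [DirectSum.Decomposition ℬ]
    [DirectSum.Decomposition 𝓟] [DirectSum.Decomposition 𝒬]
    [DirectSum.Decomposition 𝒰]
    (ap : A → P → P) (pb : P → B → P) (bq : B → Q → Q) (qa : Q → A → Q)
    (pr : P → Q → A) (br : Q → P → B)
    (ctx : GMoritaCtx Γ A B P Q 𝒜 ℬ 𝓟 𝒬 ap pb bq qa pr br)
    (sU : A → U → U) (hU : IsLMod A U sU) (hUu : IsUnitalL sU)
    (hUtf : IsTorsionFreeL sU) (hUg : IsGModL 𝒜 𝒰 sU)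
    -- `δ : Q ⊗_A U → (P →+ U)` with `δ(q⊗u)(p) = ⟨p,q⟩·u`
    (δ : Ten A qa sU →+ (P →+ U))
    (hδ : ∀ (q : Q) (u : U) (p : P), δ (tmul q u) p = sU (pr p q) u)
    -- the left `B`-action on `Q ⊗_A U`, `b·(q⊗u) = (bq)⊗u`
    (bT : B → Ten A qa sU →+ Ten A qa sU)
    (hbT : ∀ (b : B) (q : Q) (u : U), bT b (tmul q u) = tmul (bq b q) u) :
    -- δ lands in `B·HOM_A(P,U)` ...
    (∀ t, δ t ∈ smulHOM B (HOML ap sU 𝓟 𝒰) (fun (b : B) (p : P) => pb p b)) ∧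
    -- ... is left `B`-linear ...
    (∀ (b : B) t (p : P), δ (bT b t) p = δ t (pb p b)) ∧
    -- ... is surjective onto `B·HOM_A(P,U)` ...
    (∀ g ∈ smulHOM B (HOML ap sU 𝓟 𝒰) (fun (b : B) (p : P) => pb p b), ∃ t, δ t = g) ∧
    -- ... and its kernel is exactly the left `B`-torsion part of `Q ⊗_A U`,
    -- whence `(Q ⊗_A U)/t_B(Q ⊗_A U) ≅ B·HOM_A(P,U)`.
    (∀ t, δ t = 0 ↔ (∀ b : B, bT b t = 0)) := by
  classical
  -- every element of `HOM_A(P,U)` is `A`-linear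
  have flin : ∀ f ∈ HOML ap sU 𝓟 𝒰, ∀ (a : A) (p : P), f (ap a p) = sU a (f p) := by
    intro f hf
    let L : AddSubgroup (P →+ U) :=
      { carrier := {f : P →+ U | ∀ (a : A) (p : P), f (ap a p) = sU a (f p)}
        zero_mem' := by
          intro a p
          simp [hU.smul_zero'' a]
        add_mem' := by
          intro f g hf hg a p
          simp only [AddMonoidHom.add_apply, hf a p, hg a p, hU.smul_add]
        neg_mem' := by
          intro f hf a p
          simp only [AddMonoidHom.neg_apply, hf a p, hU.smul_neg''] }
    have : HOML ap sU 𝓟 𝒰 ≤ L := by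
      unfold HOML
      exact (AddSubgroup.closure_le L).mpr (fun g hg => hg.1)
    exact this hf
  -- `δ(q ⊗ u)` is a graded homomorphism
  have hom_mem_h : ∀ (σ τ : Γ) (q : Q) (u : U), q ∈ 𝒬 σ → u ∈ 𝒰 τ →
      δ (tmul q u) ∈ HOML ap sU 𝓟 𝒰 := by
    intro σ τ q u hq hu
    refine AddSubgroup.subset_closure ⟨?_, σ * τ, ?_⟩
    · intro a p
      rw [hδ, hδ, ctx.pr_linl, hU.mul_smul]
    · intro ρ p hp
      rw [hδ]
      have h2 := hUg (ctx.pr_graded hp hq) hu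
      rwa [mul_assoc] at h2
  have hom_mem : ∀ (q : Q) (u : U), δ (tmul q u) ∈ HOML ap sU 𝓟 𝒰 := by
    have step1 : ∀ (σ : Γ) (q : Q), q ∈ 𝒬 σ → ∀ u : U,
        δ (tmul q u) ∈ HOML ap sU 𝓟 𝒰 := by
      intro σ q hq u
      have h2 : u ∈ ((HOML ap sU 𝓟 𝒰).comap (δ.comp (tmulL q))) := by
        rw [← DirectSum.sum_support_decompose 𝒰 u]
        exact AddSubgroup.sum_mem _ fun τ _ =>
          hom_mem_h σ τ q _ hq (SetLike.coe_mem _)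
      exact h2
    intro q u
    have h2 : q ∈ ((HOML ap sU 𝓟 𝒰).comap (δ.comp (tmulR u))) := by
      rw [← DirectSum.sum_support_decompose 𝒬 q]
      exact AddSubgroup.sum_mem _ fun σ _ =>
        step1 σ _ (SetLike.coe_mem _) u
    exact h2
  -- part 2 : `B`-linearity
  have part2 : ∀ (b : B) (t : Ten A qa sU) (p : P), δ (bT b t) p = δ t (pb p b) := by
    intro b
    refine Ten_ind ?_ ?_ ?_ ?_
    · intro p; simp
    · intro q u p
      rw [hbT, hδ, hδ, ctx.pr_bal]
    · intro x hx p
      simp only [map_neg, AddMonoidHom.neg_apply, hx p]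
    · intro x y hx hy p
      simp only [map_add, AddMonoidHom.add_apply, hx p, hy p]
  -- part 1 : δ lands in `B·HOM_A(P,U)`
  have part1 : ∀ t, δ t ∈ smulHOM B (HOML ap sU 𝓟 𝒰) (fun (b : B) (p : P) => pb p b) := by
    have gen : ∀ (q : Q) (u : U),
        δ (tmul q u) ∈ smulHOM B (HOML ap sU 𝓟 𝒰) (fun (b : B) (p : P) => pb p b) := by
      intro q u
      have key : q ∈ ((smulHOM B (HOML ap sU 𝓟 𝒰)
          (fun (b : B) (p : P) => pb p b)).comap (δ.comp (tmulR u))) := by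
        refine (AddSubgroup.closure_le _).mpr ?_ (ctx.unitalQl q)
        rintro x ⟨b, q'', rfl⟩
        refine AddSubgroup.mem_comap.mpr ?_
        refine AddSubgroup.subset_closure ⟨b, δ (tmul q'' u), hom_mem q'' u, ?_⟩
        intro p
        show δ (tmul (bq b q'') u) p = δ (tmul q'' u) (pb p b)
        rw [hδ, hδ, ← ctx.pr_bal]
      exact key
    refine Ten_ind ?_ gen ?_ ?_
    · rw [map_zero]; exact zero_mem _
    · intro x hx; rw [map_neg]; exact neg_mem hx
    · intro x y hx hy; rw [map_add]; exact add_mem hx hy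
  -- part 3 : surjectivity
  have part3 : ∀ g ∈ smulHOM B (HOML ap sU 𝓟 𝒰) (fun (b : B) (p : P) => pb p b),
      ∃ t, δ t = g := by
    have hle : smulHOM B (HOML ap sU 𝓟 𝒰) (fun (b : B) (p : P) => pb p b) ≤ δ.range := by
      unfold smulHOM
      refine (AddSubgroup.closure_le _).mpr ?_
      rintro g ⟨b, f, hf, hg⟩
      let Sb : AddSubgroup B :=
        { carrier := {b : B | ∃ t, ∀ p : P, δ t p = f (pb p b)}
          zero_mem' := ⟨0, fun p => by
            simp [ctx.rmodP.smul_zero'']⟩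
          add_mem' := by
            rintro b₁ b₂ ⟨t₁, h₁⟩ ⟨t₂, h₂⟩
            exact ⟨t₁ + t₂, fun p => by
              rw [map_add, AddMonoidHom.add_apply, h₁ p, h₂ p,
                ctx.rmodP.smul_add, map_add]⟩
          neg_mem' := by
            rintro b₁ ⟨t₁, h₁⟩
            exact ⟨-t₁, fun p => by
              rw [map_neg, AddMonoidHom.neg_apply, h₁ p,
                ctx.rmodP.smul_neg'', map_neg]⟩ }
      have hb : b ∈ Sb := by
        refine (AddSubgroup.closure_le Sb).mpr ?_ (ctx.sur_br b)
        rintro x ⟨q, p0, rfl⟩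
        exact ⟨tmul q (f p0), fun p => by
          rw [hδ, ctx.assoc1, flin f hf]⟩
      obtain ⟨t, ht⟩ := hb
      exact AddMonoidHom.mem_range.mpr ⟨t, AddMonoidHom.ext fun p => by
        rw [ht p, ← hg p]⟩
    intro g hgm
    exact AddMonoidHom.mem_range.mp (hle hgm)
  -- additivity of the `B`-action on the tensor product
  have bT_add : ∀ (b b' : B) (t : Ten A qa sU), bT (b + b') t = bT b t + bT b' t := by
    intro b b'
    refine Ten_ind ?_ ?_ ?_ ?_
    · simp
    · intro q u
      rw [hbT, hbT, hbT, ctx.lmodQ.add_smul, tmul_add_left]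
    · intro x hx
      rw [map_neg, map_neg, map_neg, hx, neg_add]
    · intro x y hx hy
      rw [map_add, map_add, map_add, hx, hy]
      abel
  have bT_zero : ∀ t : Ten A qa sU, bT 0 t = 0 := by
    intro t
    have h := bT_add 0 0 t
    rw [add_zero] at h
    exact left_eq_add.mp h
  have bT_neg : ∀ (b : B) (t : Ten A qa sU), bT (-b) t = -(bT b t) := by
    intro b t
    have h := bT_add b (-b) t
    rw [add_neg_cancel, bT_zero, add_comm] at h
    exact eq_neg_of_add_eq_zero_left h.symm
  -- the swap identity `[q₀,p₀]·t = q₀ ⊗ (δ t p₀)`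
  have swap : ∀ (q0 : Q) (p0 : P) (t : Ten A qa sU),
      bT (br q0 p0) t = tmul q0 (δ t p0) := by
    intro q0 p0
    refine Ten_ind ?_ ?_ ?_ ?_
    · simp [tmul_zero_right]
    · intro q u
      rw [hbT, hδ, ← ctx.assoc2, tmul_bal]
    · intro x hx
      rw [map_neg, map_neg, AddMonoidHom.neg_apply, tmul_neg_right, hx]
    · intro x y hx hy
      rw [map_add, map_add, AddMonoidHom.add_apply, tmul_add_right, hx, hy]
  -- part 4 : kernel is exactly the torsion part
  have part4 : ∀ t : Ten A qa sU, δ t = 0 ↔ (∀ b : B, bT b t = 0) := by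
    intro t
    constructor
    · intro hzero b
      let Sb : AddSubgroup B :=
        { carrier := {b : B | bT b t = 0}
          zero_mem' := bT_zero t
          add_mem' := by
            intro b₁ b₂ h₁ h₂
            show bT (b₁ + b₂) t = 0
            rw [bT_add, h₁, h₂, add_zero]
          neg_mem' := by
            intro b₁ h₁
            show bT (-b₁) t = 0
            rw [bT_neg, h₁, neg_zero] }
      have hb : b ∈ Sb := by
        refine (AddSubgroup.closure_le Sb).mpr ?_ (ctx.sur_br b)
        rintro x ⟨q, p0, rfl⟩
        show bT (br q p0) t = 0
        rw [swap, hzero]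
        simp [tmul_zero_right]
      exact hb
    · intro hb
      refine AddMonoidHom.ext fun p => ?_
      have hcl := ctx.unitalPr p
      have : p ∈ (δ t).ker := by
        refine (AddSubgroup.closure_le (δ t).ker).mpr ?_ hcl
        rintro x ⟨p', b, rfl⟩
        refine AddMonoidHom.mem_ker.mpr ?_
        rw [← part2 b t p', hb b, map_zero, AddMonoidHom.zero_apply]
      exact AddMonoidHom.mem_ker.mp this
  exact ⟨part1, part2, part3, part4⟩
end
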